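/- For the HREM with σ > 0 and any β ≥ 0, the thermodynamic limit of the quenched free energy f = lim_{k→∞} f_{k+1} exists (and is finite). -/

import Mathlib

open MeasureTheory ProbabilityTheory Real Filter

/-- A configuration of `2 ^ n` Ising spins (each spin is a Boolean). -/
abbrev Cfg (n : ℕ) : Type := Fin (2 ^ n) → Bool

/-- The left half of a spin configuration. -/
def blkL {n : ℕ} (S : Cfg (n + 1)) : Cfg n :=
  fun i => S ⟨i.1, lt_of_lt_of_le i.2 (Nat.pow_le_pow_right (by norm_num) (Nat.le_succ n))⟩

/-- The right half of a spin configuration. -/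
def blkR {n : ℕ} (S : Cfg (n + 1)) : Cfg n :=
  fun i => S ⟨2 ^ n + i.1, by have := i.2; rw [pow_succ]; omega⟩

variable {Ω : Type} [MeasurableSpace Ω]

/-- The Hamiltonian of the hierarchical random energy model (HREM), defined recursively:
`H_{n+1}[S] = H_n¹[S₁] + H_n²[S₂] + 2^{(n+1)(1-σ)/2} ε_{n+1}[S]`, `H_0[S] = ε_0[S]`,
where the second argument indexes the hierarchical block (the two sub-blocks of block `j`
are `2j` and `2j+1`), so that the two half-Hamiltonians use disjoint (hence independent)
families of random energies. -/
noncomputable def hremH (σ : ℝ) (ε : ∀ l : ℕ, ℕ → Cfg l → Ω → ℝ) :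
    ∀ n : ℕ, ℕ → Cfg n → Ω → ℝ
  | 0 => fun j S => ε 0 j S
  | (n + 1) => fun j S ω =>
      hremH σ ε n (2 * j) (blkL S) ω + hremH σ ε n (2 * j + 1) (blkR S) ω
        + (2 : ℝ) ^ (((n : ℝ) + 1) * (1 - σ) / 2) * ε (n + 1) j S ω

/-- The partition function `Z_n = ∑_S exp (-β H_n[S])` of the HREM. -/
noncomputable def hremZ (σ : ℝ) (ε : ∀ l : ℕ, ℕ → Cfg l → Ω → ℝ) (β : ℝ) (n : ℕ)
    (ω : Ω) : ℝ :=
  ∑ S : Cfg n, Real.exp (-β * hremH σ ε n 0 S ω)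

/-- The quenched free energy `f_n = 2^{-n} E[log Z_n]` of the HREM. -/
noncomputable def hremF (σ : ℝ) (ε : ∀ l : ℕ, ℕ → Cfg l → Ω → ℝ) (μ : Measure Ω)
    (β : ℝ) (n : ℕ) : ℝ :=
  ((2 : ℝ) ^ n)⁻¹ * ∫ ω, Real.log (hremZ σ ε β n ω) ∂μ

/-!
Without the top-level energies, the Boltzmann weights of `Z_{k+1}` factor over the two halves,
so `Z_{k+1} = Z_k¹ Z_k²`; the top-level energies change every weight by a factor within
`exp (± β 2^{(k+1)(1-σ)/2} max_S |ε_{k+1}[S]|)`. The two halves are built from disjoint families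
of i.i.d. standard Gaussians, so `E log Z_k¹ = E log Z_k²`, and the exponential-moment bound
`E max_{i ≤ N} |X_i| ≤ (log (2N) + Λ²/2) / Λ` with `N = 2^{2^{k+1}}`, `Λ² = 2^{k+1}` gives
`|f_{k+1} - f_k| = O(β 2^{-(k+1)σ/2})`. For `σ > 0` this is geometric, so `(f_k)` is Cauchy.
-/

open Finset

def cfgSplit (n : ℕ) : Cfg (n + 1) ≃ Cfg n × Cfg n :=
  ((finSumFinEquiv.trans (finCongr (by rw [pow_succ, mul_two]))).arrowCongr
    (Equiv.refl Bool)).symm.trans (Equiv.sumArrowEquivProdArrow _ _ _)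

lemma sum_blkL_mul_blkR {R : Type*} [CommSemiring R] {n : ℕ} (F G : Cfg n → R) :
    ∑ S : Cfg (n + 1), F (blkL S) * G (blkR S) = (∑ a, F a) * ∑ b, G b := by
  rw [sum_mul_sum, ← Fintype.sum_prod_type']
  exact Fintype.sum_equiv (cfgSplit n) _ _ fun S => rfl

lemma abs_log_sum_exp_add_sub_le {ι : Type*} [Fintype ι] [Nonempty ι] (a b : ι → ℝ) {B : ℝ}
    (hb : ∀ i, |b i| ≤ B) :
    |log (∑ i, exp (a i + b i)) - log (∑ i, exp (a i))| ≤ B := by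
  have hpos : 0 < ∑ i, exp (a i) := sum_pos (fun i _ => exp_pos _) univ_nonempty
  have hupper : ∑ i, exp (a i + b i) ≤ exp B * ∑ i, exp (a i) := by
    rw [mul_sum]
    refine sum_le_sum fun i _ => ?_
    rw [exp_add, mul_comm]
    gcongr
    exact (le_abs_self _).trans (hb i)
  have hlower : exp (-B) * ∑ i, exp (a i) ≤ ∑ i, exp (a i + b i) := by
    rw [mul_sum]
    refine sum_le_sum fun i _ => ?_
    rw [exp_add, mul_comm]
    gcongr
    exact neg_le.mp ((neg_le_abs _).trans (hb i))
  have hlog (c : ℝ) : log (exp c * ∑ i, exp (a i)) = c + log (∑ i, exp (a i)) := by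
    rw [log_mul (exp_ne_zero _) hpos.ne', log_exp]
  rw [abs_sub_le_iff]
  constructor
  · linarith [log_le_log (by positivity) hupper, hlog B]
  · linarith [log_le_log (by positivity) hlower, hlog (-B)]

lemma abs_log_sum_exp_le {ι : Type*} [Fintype ι] [Nonempty ι] (b : ι → ℝ) :
    |log (∑ i, exp (b i))| ≤ log (Fintype.card ι) + ∑ i, |b i| := by
  have h := abs_log_sum_exp_add_sub_le 0 b fun i =>
    single_le_sum (f := fun i => |b i|) (fun i _ => abs_nonneg _) (mem_univ i)
  have hcard : 0 ≤ log (Fintype.card ι) := log_nonneg (by exact_mod_cast Fintype.card_pos)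
  simp only [Pi.zero_apply, zero_add, exp_zero, sum_const, card_univ, nsmul_eq_mul,
    mul_one] at h
  linarith [abs_sub_abs_le_abs_sub (log (∑ i, exp (b i))) (log (Fintype.card ι)),
    abs_of_nonneg hcard]

lemma map_comp_injective_eq_infinitePi {ι κ 𝓧 : Type*} [MeasurableSpace 𝓧] {μ : Measure Ω}
    {X : ι → Ω → 𝓧} (hXm : ∀ i, Measurable (X i)) (hind : iIndepFun X μ) {ν : Measure 𝓧}
    [IsProbabilityMeasure ν] (hX : ∀ i, μ.map (X i) = ν) {g : κ → ι}
    (hg : Function.Injective g) :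
    μ.map (fun ω k => X (g k) ω) = Measure.infinitePi fun _ => ν := by
  rw [(hind.precomp hg).map_fun_eq_infinitePi_map fun k => hXm (g k)]
  simp only [hX]

section Gaussian

variable {μ : Measure Ω} {X : Ω → ℝ}

lemma integrable_exp_mul_of_map_eq_gaussianReal [IsProbabilityMeasure μ]
    (hX : μ.map X = gaussianReal 0 1) (t : ℝ) :
    Integrable (fun ω => exp (t * X ω)) μ := by
  rw [← mgf_pos_iff, mgf_gaussianReal hX]
  exact exp_pos _

lemma integral_exp_mul_of_map_eq_gaussianReal (hX : μ.map X = gaussianReal 0 1) (t : ℝ) :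
    ∫ ω, exp (t * X ω) ∂μ = exp (t ^ 2 / 2) := by
  have h := mgf_gaussianReal hX t
  rwa [zero_mul, NNReal.coe_one, one_mul, zero_add] at h

lemma integrable_of_map_eq_gaussianReal (hXm : Measurable X) (hX : μ.map X = gaussianReal 0 1) :
    Integrable X μ := by
  have h : Integrable id (μ.map X) := by
    rw [hX]
    exact (memLp_id_gaussianReal 1).integrable le_rfl
  exact (integrable_map_measure aestronglyMeasurable_id hXm.aemeasurable).mp h

variable {ι : Type*} [Fintype ι] [Nonempty ι] {X : ι → Ω → ℝ}

lemma integrable_sup'_abs (hX : ∀ i, Integrable (X i) μ) :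
    Integrable (fun ω => univ.sup' univ_nonempty fun i => |X i ω|) μ := by
  have h := sup'_induction univ_nonempty (fun i ω => |X i ω|) (p := fun f => Integrable f μ)
    (fun f hf g hg => hf.sup hg) fun i _ => (hX i).abs
  convert h using 1
  funext ω
  rw [Finset.sup'_apply]

lemma integral_sup'_abs_le_of_gaussian [IsProbabilityMeasure μ] (hXm : ∀ i, Measurable (X i))
    (hX : ∀ i, μ.map (X i) = gaussianReal 0 1) {Λ : ℝ} (hΛ : 0 < Λ) :
    ∫ ω, (univ.sup' univ_nonempty fun i => |X i ω|) ∂μ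
      ≤ (log (2 * Fintype.card ι) + Λ ^ 2 / 2) / Λ := by
  set W : Ω → ℝ := fun ω => ∑ i, (exp (Λ * X i ω) + exp (-Λ * X i ω))
  have hterm_int (i : ι) : Integrable (fun ω => exp (Λ * X i ω) + exp (-Λ * X i ω)) μ :=
    (integrable_exp_mul_of_map_eq_gaussianReal (hX i) Λ).add
      (integrable_exp_mul_of_map_eq_gaussianReal (hX i) (-Λ))
  have hW_int : Integrable W μ := integrable_finsetSum univ fun i _ => hterm_int i
  have hW_integral : ∫ ω, W ω ∂μ = 2 * Fintype.card ι * exp (Λ ^ 2 / 2) := by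
    simp only [W]
    rw [integral_finsetSum univ fun i _ => hterm_int i]
    simp only [integral_add (integrable_exp_mul_of_map_eq_gaussianReal (hX _) Λ)
      (integrable_exp_mul_of_map_eq_gaussianReal (hX _) (-Λ)),
      integral_exp_mul_of_map_eq_gaussianReal (hX _), neg_sq, sum_const, card_univ, nsmul_eq_mul]
    ring
  have hW_ge (i : ι) (ω : Ω) : exp (Λ * |X i ω|) ≤ W ω := by
    refine le_trans ?_ (single_le_sum (f := fun i => exp (Λ * X i ω) + exp (-Λ * X i ω))
      (fun i _ => by positivity) (mem_univ i))
    rcases abs_cases (X i ω) with ⟨h, _⟩ | ⟨h, _⟩ <;> rw [h]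
    · exact le_add_of_nonneg_right (exp_nonneg _)
    · rw [mul_neg, ← neg_mul]
      exact le_add_of_nonneg_left (exp_nonneg _)
  have hW_one (ω : Ω) : 1 ≤ W ω := by
    obtain ⟨i⟩ := ‹Nonempty ι›
    exact (one_le_exp (by positivity)).trans (hW_ge i ω)
  have hsup_le (ω : Ω) : (univ.sup' univ_nonempty fun i => |X i ω|) ≤ log (W ω) / Λ :=
    sup'_le _ _ fun i _ => by
      rw [le_div_iff₀ hΛ, mul_comm, le_log_iff_exp_le (by linarith [hW_one ω])]
      exact hW_ge i ω
  have hlogW_int : Integrable (fun ω => log (W ω)) μ := by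
    refine hW_int.mono' (Measurable.aestronglyMeasurable (by fun_prop)) (ae_of_all _ fun ω => ?_)
    rw [norm_of_nonneg (log_nonneg (hW_one ω))]
    exact log_le_self (zero_le_one.trans (hW_one ω))
  have jensen : ∫ ω, log (W ω) ∂μ ≤ log (∫ ω, W ω ∂μ) :=
    (strictConcaveOn_log_Ioi.concaveOn.subset (fun x hx => lt_of_lt_of_le one_pos hx)
      (convex_Ici 1)).le_map_integral
      (continuousOn_log.mono fun x hx => ne_of_gt (lt_of_lt_of_le one_pos hx)) isClosed_Ici
      (ae_of_all _ hW_one) hW_int hlogW_int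
  have hsup_int : Integrable (fun ω => univ.sup' univ_nonempty fun i => |X i ω|) μ :=
    integrable_sup'_abs fun i => integrable_of_map_eq_gaussianReal (hXm i) (hX i)
  calc ∫ ω, (univ.sup' univ_nonempty fun i => |X i ω|) ∂μ
      ≤ ∫ ω, log (W ω) / Λ ∂μ := integral_mono hsup_int (hlogW_int.div_const Λ) hsup_le
    _ = (∫ ω, log (W ω) ∂μ) / Λ := integral_div Λ _
    _ ≤ log (∫ ω, W ω ∂μ) / Λ := by gcongr
    _ = (log (2 * Fintype.card ι) + Λ ^ 2 / 2) / Λ := by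
      rw [hW_integral, log_mul (by positivity) (exp_ne_zero _), log_exp]

end Gaussian

abbrev HremIdx : Type := Σ l : ℕ, ℕ × Cfg l

noncomputable def hremHOfField (σ : ℝ) (x : HremIdx → ℝ) : ∀ n : ℕ, ℕ → Cfg n → ℝ
  | 0 => fun j S => x ⟨0, j, S⟩
  | (n + 1) => fun j S =>
      hremHOfField σ x n (2 * j) (blkL S) + hremHOfField σ x n (2 * j + 1) (blkR S)
        + (2 : ℝ) ^ (((n : ℝ) + 1) * (1 - σ) / 2) * x ⟨n + 1, j, S⟩

lemma hremH_eq_hremHOfField {Ω : Type} (σ : ℝ) (ε : ∀ l : ℕ, ℕ → Cfg l → Ω → ℝ) (n j : ℕ)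
    (S : Cfg n) (ω : Ω) :
    hremH σ ε n j S ω = hremHOfField σ (fun q => ε q.1 q.2.1 q.2.2 ω) n j S := by
  induction n generalizing j with
  | zero => rfl
  | succ n ih => simp only [hremH, hremHOfField, ih]

lemma hremHOfField_congr {σ : ℝ} {x y : HremIdx → ℝ} {n : ℕ}
    (h : ∀ q : HremIdx, q.1 ≤ n → x q = y q) (j : ℕ) (S : Cfg n) :
    hremHOfField σ x n j S = hremHOfField σ y n j S := by
  induction n generalizing j with
  | zero => exact h _ le_rfl
  | succ n ih =>
    simp only [hremHOfField, ih fun q hq => h q (hq.trans n.le_succ), h ⟨n + 1, j, S⟩ le_rfl]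

lemma measurable_hremHOfField (σ : ℝ) (n j : ℕ) (S : Cfg n) :
    Measurable fun x : HremIdx → ℝ => hremHOfField σ x n j S := by
  induction n generalizing j with
  | zero => exact measurable_pi_apply _
  | succ n ih => exact ((ih _ _).add (ih _ _)).add ((measurable_pi_apply _).const_mul _)

/-- Sends the energy read by block `0` of level `n` to the one read by block `j`. -/
def blockShift (n j : ℕ) (q : HremIdx) : HremIdx := ⟨q.1, j * 2 ^ (n - q.1) + q.2.1, q.2.2⟩

lemma blockShift_injective (n j : ℕ) : Function.Injective (blockShift n j) := by
  rintro ⟨l, b, c⟩ ⟨l', b', c'⟩ h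
  simp only [blockShift, Sigma.mk.injEq] at h
  obtain ⟨rfl, h⟩ := h
  simp_all

lemma blockShift_succ_comp {n : ℕ} (j k : ℕ) {q : HremIdx} (hq : q.1 ≤ n) :
    blockShift (n + 1) j (blockShift n k q) = blockShift n (2 * j + k) q := by
  have : 2 ^ (n + 1 - q.1) = 2 * 2 ^ (n - q.1) := by
    rw [Nat.sub_add_comm hq, pow_succ, mul_comm]
  simp only [blockShift, this]
  congr 2
  ring

lemma hremHOfField_eq_comp_blockShift (σ : ℝ) (x : HremIdx → ℝ) (n j : ℕ) (S : Cfg n) :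
    hremHOfField σ x n j S = hremHOfField σ (x ∘ blockShift n j) n 0 S := by
  induction n generalizing j x with
  | zero => simp [hremHOfField, blockShift]
  | succ n ih =>
    have shift (k : ℕ) (T : Cfg n) : hremHOfField σ (x ∘ blockShift (n + 1) j) n k T
        = hremHOfField σ x n (2 * j + k) T := by
      rw [ih, ih x]
      exact hremHOfField_congr (fun q hq => congrArg x (blockShift_succ_comp j k hq)) 0 T
    simp only [hremHOfField, shift, Function.comp_apply]
    simp [blockShift]

noncomputable def hremZBlock {Ω : Type} (σ : ℝ) (ε : ∀ l : ℕ, ℕ → Cfg l → Ω → ℝ) (β : ℝ)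
    (n j : ℕ) (ω : Ω) : ℝ :=
  ∑ S : Cfg n, exp (-β * hremH σ ε n j S ω)

lemma abs_log_hremZBlock_succ_sub_le {Ω : Type} {σ β : ℝ} {ε : ∀ l : ℕ, ℕ → Cfg l → Ω → ℝ}
    (hβ : 0 ≤ β) (n j : ℕ) (ω : Ω) :
    |log (hremZBlock σ ε β (n + 1) j ω) - log (hremZBlock σ ε β n (2 * j) ω)
        - log (hremZBlock σ ε β n (2 * j + 1) ω)|
      ≤ β * (2 : ℝ) ^ (((n : ℝ) + 1) * (1 - σ) / 2)
          * univ.sup' univ_nonempty fun S => |ε (n + 1) j S ω| := by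
  have hc : 0 ≤ (2 : ℝ) ^ (((n : ℝ) + 1) * (1 - σ) / 2) := by positivity
  have hpos (m k : ℕ) : 0 < hremZBlock σ ε β m k ω :=
    sum_pos (fun S _ => exp_pos _) univ_nonempty
  have hsplit : hremZBlock σ ε β n (2 * j) ω * hremZBlock σ ε β n (2 * j + 1) ω
      = ∑ S : Cfg (n + 1),
          exp (-β * hremH σ ε n (2 * j) (blkL S) ω + -β * hremH σ ε n (2 * j + 1) (blkR S) ω) := by
    simp only [hremZBlock, exp_add]
    exact (sum_blkL_mul_blkR _ _).symm
  have hsucc : hremZBlock σ ε β (n + 1) j ω = ∑ S : Cfg (n + 1),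
      exp ((-β * hremH σ ε n (2 * j) (blkL S) ω + -β * hremH σ ε n (2 * j + 1) (blkR S) ω)
        + -β * ((2 : ℝ) ^ (((n : ℝ) + 1) * (1 - σ) / 2) * ε (n + 1) j S ω)) := by
    refine sum_congr rfl fun S _ => ?_
    rw [hremH]
    congr 1
    ring
  rw [sub_sub, ← log_mul (hpos _ _).ne' (hpos _ _).ne', hsplit, hsucc]
  refine abs_log_sum_exp_add_sub_le _ _ fun S => ?_
  rw [abs_mul, abs_mul, abs_neg, abs_of_nonneg hβ, abs_of_nonneg hc, mul_assoc]
  gcongr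
  exact le_sup' (fun S => |ε (n + 1) j S ω|) (mem_univ S)

lemma log_two_mul_card_cfg_le (m : ℕ) : log (2 * Fintype.card (Cfg m)) ≤ 2 * 2 ^ m := by
  have hcard : (2 * Fintype.card (Cfg m) : ℝ) = 2 ^ (2 ^ m + 1) := by
    simp [pow_succ, mul_comm]
  have hm : (1 : ℝ) ≤ 2 ^ m := one_le_pow₀ one_le_two
  rw [hcard, log_pow]
  push_cast
  nlinarith [log_two_lt_d9, log_pos one_lt_two]

lemma two_rpow_succ_mul_one_sub_div_two (σ : ℝ) (n : ℕ) :
    (2 : ℝ) ^ (((n : ℝ) + 1) * (1 - σ) / 2)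
      = (2 : ℝ) ^ (((n : ℝ) + 1) / 2) * ((2 : ℝ) ^ (-σ / 2)) ^ (n + 1) := by
  rw [← rpow_mul_natCast zero_le_two, ← rpow_add zero_lt_two]
  push_cast
  ring_nf

lemma two_rpow_half_sq (n : ℕ) : ((2 : ℝ) ^ (((n : ℝ) + 1) / 2)) ^ 2 = 2 ^ (n + 1) := by
  rw [← rpow_mul_natCast zero_le_two, ← rpow_natCast]
  push_cast
  ring_nf

section Hrem

variable {μ : Measure Ω} {σ β : ℝ} {ε : ∀ l : ℕ, ℕ → Cfg l → Ω → ℝ}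

lemma measurable_hremH (hmeas : ∀ l j c, Measurable (ε l j c)) (n j : ℕ) (S : Cfg n) :
    Measurable (hremH σ ε n j S) := by
  induction n generalizing j with
  | zero => exact hmeas 0 j S
  | succ n ih => exact ((ih _ _).add (ih _ _)).add ((hmeas _ _ _).const_mul _)

lemma integrable_hremH (hmeas : ∀ l j c, Measurable (ε l j c))
    (hgauss : ∀ l j c, μ.map (ε l j c) = gaussianReal 0 1) (n j : ℕ) (S : Cfg n) :
    Integrable (hremH σ ε n j S) μ := by
  induction n generalizing j with
  | zero => exact integrable_of_map_eq_gaussianReal (hmeas 0 j S) (hgauss 0 j S)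
  | succ n ih =>
    exact ((ih _ _).add (ih _ _)).add
      ((integrable_of_map_eq_gaussianReal (hmeas _ _ _) (hgauss _ _ _)).const_mul _)

lemma integrable_log_hremZBlock [IsFiniteMeasure μ] (hmeas : ∀ l j c, Measurable (ε l j c))
    (hgauss : ∀ l j c, μ.map (ε l j c) = gaussianReal 0 1) (n j : ℕ) :
    Integrable (fun ω => log (hremZBlock σ ε β n j ω)) μ := by
  have hbound : Integrable
      (fun ω => log (Fintype.card (Cfg n)) + ∑ S, |-β * hremH σ ε n j S ω|) μ :=
    (integrable_const _).add (integrable_finsetSum _ fun S _ =>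
      ((integrable_hremH hmeas hgauss n j S).const_mul _).abs)
  refine hbound.mono' (Measurable.aestronglyMeasurable ?_) (ae_of_all _ fun ω => ?_)
  · have := measurable_hremH (σ := σ) hmeas n j
    unfold hremZBlock
    fun_prop
  · exact abs_log_sum_exp_le _

lemma integral_log_hremZBlock_eq_integral_infinitePi [IsProbabilityMeasure μ]
    (hmeas : ∀ l j c, Measurable (ε l j c))
    (hgauss : ∀ l j c, μ.map (ε l j c) = gaussianReal 0 1)
    (hindep : iIndepFun (fun q : HremIdx => ε q.1 q.2.1 q.2.2) μ) (n j : ℕ) :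
    ∫ ω, log (hremZBlock σ ε β n j ω) ∂μ
      = ∫ x, log (∑ S : Cfg n, exp (-β * hremHOfField σ x n 0 S))
          ∂(Measure.infinitePi fun _ : HremIdx => gaussianReal 0 1) := by
  have hF : Measurable fun x : HremIdx → ℝ =>
      log (∑ S : Cfg n, exp (-β * hremHOfField σ x n 0 S)) := by
    have := measurable_hremHOfField σ n 0
    fun_prop
  rw [← map_comp_injective_eq_infinitePi (fun q => hmeas q.1 q.2.1 q.2.2) hindep
    (fun q => hgauss q.1 q.2.1 q.2.2) (blockShift_injective n j),
    integral_map (measurable_pi_lambda _ fun q => hmeas _ _ _).aemeasurable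
      hF.aestronglyMeasurable]
  simp only [hremZBlock, hremH_eq_hremHOfField, hremHOfField_eq_comp_blockShift σ _ n j]
  rfl

lemma abs_integral_log_hremZBlock_succ_sub_le [IsProbabilityMeasure μ] (hβ : 0 ≤ β)
    (hmeas : ∀ l j c, Measurable (ε l j c))
    (hgauss : ∀ l j c, μ.map (ε l j c) = gaussianReal 0 1)
    (hindep : iIndepFun (fun q : HremIdx => ε q.1 q.2.1 q.2.2) μ) (n : ℕ) {Λ : ℝ}
    (hΛ : 0 < Λ) :
    |∫ ω, log (hremZBlock σ ε β (n + 1) 0 ω) ∂μ - 2 * ∫ ω, log (hremZBlock σ ε β n 0 ω) ∂μ|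
      ≤ β * (2 : ℝ) ^ (((n : ℝ) + 1) * (1 - σ) / 2)
          * ((log (2 * Fintype.card (Cfg (n + 1))) + Λ ^ 2 / 2) / Λ) := by
  have hint (m j : ℕ) := integrable_log_hremZBlock (σ := σ) (β := β) hmeas hgauss m j
  have hsym : ∫ ω, log (hremZBlock σ ε β n 1 ω) ∂μ = ∫ ω, log (hremZBlock σ ε β n 0 ω) ∂μ := by
    rw [integral_log_hremZBlock_eq_integral_infinitePi hmeas hgauss hindep,
      integral_log_hremZBlock_eq_integral_infinitePi hmeas hgauss hindep]
  have hsup_int : Integrable (fun ω => univ.sup' univ_nonempty fun S => |ε (n + 1) 0 S ω|) μ :=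
    integrable_sup'_abs fun S => integrable_of_map_eq_gaussianReal (hmeas _ _ S) (hgauss _ _ S)
  calc _ = |∫ ω, (log (hremZBlock σ ε β (n + 1) 0 ω) - log (hremZBlock σ ε β n 0 ω)
          - log (hremZBlock σ ε β n 1 ω)) ∂μ| := by
        rw [integral_sub _ (hint _ _), integral_sub (hint _ _) (hint _ _), hsym, two_mul, sub_sub]
        exact (hint _ _).sub (hint _ _)
    _ ≤ ∫ ω, β * (2 : ℝ) ^ (((n : ℝ) + 1) * (1 - σ) / 2)
          * univ.sup' univ_nonempty (fun S => |ε (n + 1) 0 S ω|) ∂μ :=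
        abs_integral_le_integral_abs.trans <| integral_mono
          (((hint _ _).sub (hint _ _)).sub (hint _ _)).abs (hsup_int.const_mul _)
          fun ω => by simpa using abs_log_hremZBlock_succ_sub_le hβ n 0 ω
    _ ≤ _ := by
        rw [integral_const_mul]
        gcongr
        exact integral_sup'_abs_le_of_gaussian (fun S => hmeas _ _ S) (fun S => hgauss _ _ S) hΛ

lemma abs_hremF_succ_sub_le [IsProbabilityMeasure μ] (hβ : 0 ≤ β)
    (hmeas : ∀ l j c, Measurable (ε l j c))
    (hgauss : ∀ l j c, μ.map (ε l j c) = gaussianReal 0 1)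
    (hindep : iIndepFun (fun q : HremIdx => ε q.1 q.2.1 q.2.2) μ) (n : ℕ) :
    |hremF σ ε μ β (n + 1) - hremF σ ε μ β n| ≤ 3 * β * ((2 : ℝ) ^ (-σ / 2)) ^ (n + 1) := by
  set Λ : ℝ := (2 : ℝ) ^ (((n : ℝ) + 1) / 2)
  have hΛ : 0 < Λ := by positivity
  have hdiff : hremF σ ε μ β (n + 1) - hremF σ ε μ β n = ((2 : ℝ) ^ (n + 1))⁻¹
      * (∫ ω, log (hremZBlock σ ε β (n + 1) 0 ω) ∂μ
        - 2 * ∫ ω, log (hremZBlock σ ε β n 0 ω) ∂μ) := by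
    simp only [hremF, hremZ, hremZBlock, pow_succ]
    field_simp
  have hstep := abs_integral_log_hremZBlock_succ_sub_le (σ := σ) hβ hmeas hgauss hindep n hΛ
  rw [two_rpow_succ_mul_one_sub_div_two, two_rpow_half_sq] at hstep
  have hlog := log_two_mul_card_cfg_le (n + 1)
  rw [hdiff, abs_mul, abs_inv, abs_of_pos (by positivity)]
  calc _ ≤ ((2 : ℝ) ^ (n + 1))⁻¹ * (β * (Λ * ((2 : ℝ) ^ (-σ / 2)) ^ (n + 1))
          * ((log (2 * Fintype.card (Cfg (n + 1))) + 2 ^ (n + 1) / 2) / Λ)) := by gcongr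
    _ = β * ((2 : ℝ) ^ (-σ / 2)) ^ (n + 1)
          * ((log (2 * Fintype.card (Cfg (n + 1))) + 2 ^ (n + 1) / 2) / 2 ^ (n + 1)) := by
        field_simp
    _ ≤ β * ((2 : ℝ) ^ (-σ / 2)) ^ (n + 1) * 3 := by
        gcongr
        rw [div_le_iff₀ (by positivity)]
        linarith [pow_pos (two_pos : (0 : ℝ) < 2) (n + 1)]
    _ = _ := by ring

end Hrem

/-- **Existence of the thermodynamic limit of the HREM free energy.** For `σ > 0` and
`β ≥ 0`, the limit `f = lim_{k→∞} f_{k+1}` exists (and is finite). -/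
theorem hremF_limit_exists
    (σ β : ℝ) (hσ : 0 < σ) (hβ : 0 ≤ β) (μ : Measure Ω) [IsProbabilityMeasure μ]
    (ε : ∀ l : ℕ, ℕ → Cfg l → Ω → ℝ)
    (hmeas : ∀ l j c, Measurable (ε l j c))
    (hgauss : ∀ l j c, μ.map (ε l j c) = gaussianReal 0 1)
    (hindep : iIndepFun
      (fun q : Σ l : ℕ, ℕ × Cfg l => ε q.1 q.2.1 q.2.2) μ) :
    ∃ f : ℝ, Tendsto (fun k => hremF σ ε μ β (k + 1)) atTop (nhds f) := by
  have hratio : (2 : ℝ) ^ (-σ / 2) < 1 := rpow_lt_one_of_one_lt_of_neg one_lt_two (by linarith)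
  have hcauchy : CauchySeq (hremF σ ε μ β) :=
    cauchySeq_of_le_geometric _ (3 * β * (2 : ℝ) ^ (-σ / 2)) hratio fun n => by
      rw [dist_comm, dist_eq]
      exact (abs_hremF_succ_sub_le hβ hmeas hgauss hindep n).trans_eq (by ring)
  obtain ⟨f, hf⟩ := cauchySeq_tendsto_of_complete hcauchy
  exact ⟨f, hf.comp (tendsto_add_atTop_nat 1)⟩
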